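/- Let m ≥ 2 be an even natural number. Then B = (-1)^{m/2} · (1 − m + ∑_{k=0}^{m/2 − 2} C(m-1, 2k+1) · (C(m-1, 2k+2) − C(m-1, 2k))) equals C(m-1, m/2). -/

import Mathlib

/-!
With `n = m - 1 = 2h + 1`, grouping the terms of index `2k` and `2k + 1` shows that, after
adjoining the term `1 - m` as `k = h`, the bracket is `-∑ⱼ (-1)ʲ C(n, j) C(n, j + 1)`.
By symmetry of binomial coefficients this alternating sum is the coefficient of `X²ʰ` in
`(1 - X)ⁿ (1 + X)ⁿ = (1 - X²)ⁿ`, namely `(-1)ʰ C(n, h)`, and `C(n, h) = C(n, h + 1)`.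
-/

open Polynomial Finset

theorem Finset.sum_range_two_mul_eq_sum_pairs {M : Type*} [AddCommMonoid M] (f : ℕ → M) (n : ℕ) :
    ∑ j ∈ range (2 * n), f j = ∑ k ∈ range n, (f (2 * k) + f (2 * k + 1)) := by
  induction n with
  | zero => simp
  | succ n ih => rw [Nat.mul_succ, sum_range_succ, sum_range_succ, sum_range_succ, ih, add_assoc]

theorem Polynomial.coeff_one_sub_X_pow {R : Type*} [CommRing R] (n k : ℕ) :
    ((1 - X : R[X]) ^ n).coeff k = (-1) ^ k * n.choose k := by
  rcases le_or_gt k n with hk | hk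
  · have hsign : (-1 : R) ^ n * (-1) ^ (n - k) = (-1) ^ k := by
      obtain ⟨d, rfl⟩ := Nat.exists_eq_add_of_le hk
      rw [Nat.add_sub_cancel_left, pow_add, mul_assoc, ← mul_pow, neg_one_mul, neg_neg, one_pow,
        mul_one]
    rw [show (1 - X : R[X]) = -1 * (X + C (-1)) by simp; ring, mul_pow, ← C_1, ← C_neg, ← C_pow,
      coeff_C_mul, coeff_X_add_C_pow, ← mul_assoc, hsign]
  · rw [coeff_eq_zero_of_natDegree_lt, Nat.choose_eq_zero_of_lt hk, Nat.cast_zero, mul_zero]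
    have hdeg : (1 - X : R[X]).natDegree ≤ 1 :=
      natDegree_sub_le_of_le natDegree_one.le natDegree_X_le
    exact (natDegree_pow_le_of_le n hdeg).trans_lt (by simpa using hk)

theorem Int.sum_antidiagonal_neg_one_pow_mul_choose_mul_choose (n k : ℕ) :
    ∑ p ∈ antidiagonal (2 * k), (-1 : ℤ) ^ p.1 * n.choose p.1 * n.choose p.2 =
      (-1) ^ k * n.choose k := by
  have hprod : (1 - X : ℤ[X]) ^ n * (1 + X) ^ n = expand ℤ 2 ((1 - X) ^ n) := by
    rw [← mul_pow, map_pow, map_sub, map_one, expand_X]; ring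
  simpa only [coeff_mul, coeff_one_sub_X_pow, coeff_one_add_X_pow, coeff_expand_mul' two_pos]
    using congrArg (coeff · (2 * k)) hprod

theorem Int.sum_range_neg_one_pow_mul_choose_mul_choose_succ (h : ℕ) :
    ∑ j ∈ Finset.range (2 * (h + 1)),
        (-1 : ℤ) ^ j * (2 * h + 1).choose j * (2 * h + 1).choose (j + 1) =
      (-1) ^ h * (2 * h + 1).choose h := by
  rw [Nat.mul_succ, sum_range_succ, Nat.choose_succ_self, Nat.cast_zero, mul_zero, add_zero,
    ← sum_antidiagonal_neg_one_pow_mul_choose_mul_choose, Nat.sum_antidiagonal_eq_sum_range_succ_mk]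
  refine sum_congr rfl fun j hj => ?_
  rw [Nat.choose_symm_of_eq_add (a := j + 1) (b := 2 * h - j) (by grind)]

theorem stmt_8 (m : ℕ) (hm : 2 ≤ m) (hme : Even m) :
    (-1 : ℤ) ^ (m / 2) *
      (1 - (m : ℤ) +
        ∑ k ∈ Finset.range (m / 2 - 1),
          ((m - 1).choose (2 * k + 1) : ℤ) *
            (((m - 1).choose (2 * k + 2) : ℤ) - ((m - 1).choose (2 * k) : ℤ))) =
    ((m - 1).choose (m / 2) : ℤ) := by
  obtain ⟨h, rfl⟩ : ∃ h, m = 2 * h + 2 := by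
    obtain ⟨t, rfl⟩ := hme
    exact ⟨t - 1, by omega⟩
  rw [show (2 * h + 2) / 2 = h + 1 by omega, show 2 * h + 2 - 1 = 2 * h + 1 by omega,
    Nat.add_sub_cancel]
  set n := 2 * h + 1
  have hlast : 1 - ((2 * h + 2 : ℕ) : ℤ) =
      (n.choose (2 * h + 1) : ℤ) * (n.choose (2 * h + 2) - n.choose (2 * h)) := by
    rw [Nat.choose_self, Nat.choose_succ_self, Nat.choose_symm_of_eq_add (b := 1) rfl,
      Nat.choose_one_right]
    push_cast; ring
  have hpairs : ∑ k ∈ range (h + 1),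
      (n.choose (2 * k + 1) : ℤ) * (n.choose (2 * k + 2) - n.choose (2 * k)) =
      -∑ j ∈ range (2 * (h + 1)), (-1 : ℤ) ^ j * n.choose j * n.choose (j + 1) := by
    rw [sum_range_two_mul_eq_sum_pairs, ← sum_neg_distrib]
    refine sum_congr rfl fun k _ => ?_
    rw [pow_succ, pow_mul, neg_one_sq, one_pow]
    ring
  rw [sum_range_succ_comm] at hpairs
  rw [hlast, hpairs, Int.sum_range_neg_one_pow_mul_choose_mul_choose_succ,
    Nat.choose_symm_of_eq_add (b := h + 1) (by omega)]
  linear_combination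
    (n.choose (h + 1) : ℤ) * pow_mul_pow_eq_one h (by norm_num : (-1 : ℤ) * -1 = 1)
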